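/- Let ε > 0, γ > 1, and n ≥ 2 an integer. There exists exactly one function h : [0,1] → ℝ that is continuous on [0,1], twice continuously differentiable on (0,1), and satisfies Lh = 0 on (0,1), h(0) = 0, and h(1) = 1. Moreover, this h is strictly increasing on [0,1], satisfies r < h(r) < r^α for all r ∈ (0,1), and there exists a constant C(ε) > 0, depending only on n, γ, and ε, such that h(r) < C(ε)·r for all r ∈ (0,1). -/

import Mathlib

/-!
Writing `L h = 0` as a linear first-order system for `(h, h')` and solving it backwards from
`r = 1` gives the solutions `h_t` on `(0, 1]` with `h_t 1 = 1`, `h_t' 1 = t`. The zeroth-order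
coefficient of `L` is positive, so `L` satisfies a maximum principle: `L w ≥ 0` forbids a positive
interior maximum of `w`. Comparing `h_t` with `0` and with the supersolution `r ^ α` shows that
the parameters `t` for which `h_t` becomes negative and those for which it exceeds `r ^ α` form
disjoint sets; both are open and nonempty, so by connectedness of `ℝ` some `h_t` stays between
`0` and `r ^ α` and extends continuously by `h 0 = 0`. The maximum principle then gives
uniqueness, `r < h < r ^ α` (`r` is a subsolution), monotonicity (no interior local maximum)
and, with the supersolution `4M (r - M r³)`, `M = 1 + 1/ε`, near `0`, the bound `h < C r`.
-/

open Set Filter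

noncomputable section

/-- The ODE operator `L`:
`(L h)(r) = h'' + ((n-2)/r + 2r/(ε+r²)) h' - ((n-2)/r² + 2/(γ(ε+r²))) h`. -/
def Lop (n : ℕ) (γ ε : ℝ) (h : ℝ → ℝ) (r : ℝ) : ℝ :=
  deriv (deriv h) r + (((n:ℝ) - 2)/r + 2*r/(ε + r^2)) * deriv h r
    - (((n:ℝ) - 2)/r^2 + 2/(γ*(ε + r^2))) * h r

/-- `α := (-(n-1) + √((n-1)² + 4(n-2 + 2/γ)))/2`. -/
def alphaN (n : ℕ) (γ : ℝ) : ℝ :=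
  (-((n:ℝ) - 1) + Real.sqrt (((n:ℝ)-1)^2 + 4*((n:ℝ) - 2 + 2/γ)))/2

/-- `h` is a normalized solution of `Lh = 0` on `(0,1)`: continuous on `[0,1]`,
twice continuously differentiable on `(0,1)`, with `h(0) = 0` and `h(1) = 1`. -/
def IsODESol (n : ℕ) (γ ε : ℝ) (h : ℝ → ℝ) : Prop :=
  ContinuousOn h (Icc (0:ℝ) 1) ∧ (∀ r ∈ Ioo (0:ℝ) 1, ContDiffAt ℝ 2 h r) ∧
    (∀ r ∈ Ioo (0:ℝ) 1, Lop n γ ε h r = 0) ∧ h 0 = 0 ∧ h 1 = 1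

open Topology
open scoped NNReal

theorem IsLocalMax.deriv_deriv_nonpos {f : ℝ → ℝ} {x : ℝ} (h : IsLocalMax f x)
    (hc : ContinuousAt f x) : deriv (deriv f) x ≤ 0 := by
  by_contra! hpos
  -- the second-derivative test would make `x` a local minimum too, so `f` is locally constant
  have hconst : f =ᶠ[𝓝 x] fun _ => f x :=
    (h.and (isLocalMin_of_deriv_deriv_pos hpos h.deriv_eq_zero hc)).mono
      fun y hy => le_antisymm hy.1 hy.2
  have := hconst.deriv.deriv_eq
  simp only [deriv_const'] at this
  exact hpos.ne' (this.trans (by simp))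

theorem strictMonoOn_Icc_of_forall_not_isLocalMax {f : ℝ → ℝ} {a b : ℝ}
    (hf : ContinuousOn f (Icc a b)) (hleft : ∀ x ∈ Ioc a b, f a < f x)
    (hmax : ∀ x ∈ Ioo a b, ¬IsLocalMax f x) : StrictMonoOn f (Icc a b) := by
  intro x hx y hy hxy
  by_contra! hyx
  have hax : a < x := hx.1.lt_of_ne fun hax => by
    subst hax; exact (hleft y ⟨hxy, hy.2⟩).not_ge hyx
  obtain ⟨m, hm, hmax_m⟩ := isCompact_Icc.exists_isMaxOn ⟨a, left_mem_Icc.2 hy.1⟩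
    (hf.mono (Icc_subset_Icc_right hy.2))
  obtain ⟨p, hp, hpmax⟩ : ∃ p ∈ Ioo a y, IsMaxOn f (Icc a y) p := by
    rcases hm.2.lt_or_eq with hmy | rfl
    · refine ⟨m, ⟨hm.1.lt_of_ne fun ham => ?_, hmy⟩, hmax_m⟩
      subst ham
      exact (hleft x ⟨hax, hx.2⟩).not_ge (hmax_m ⟨hax.le, hxy.le⟩)
    · exact ⟨x, ⟨hax, hxy⟩, fun z hz => (hmax_m hz).trans hyx⟩
  exact hmax p ⟨hp.1, hp.2.trans_le hy.2⟩ (hpmax.isLocalMax (Icc_mem_nhds hp.1 hp.2))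

section LipschitzODE

variable {E : Type*} [NormedAddCommGroup E] [NormedSpace ℝ E] {F : ℝ → E → E} {K : ℝ≥0} {a b : ℝ}

theorem hasDerivWithinAt_Icc_ite {f g : ℝ → E} {c : ℝ} (hab : a ≤ b) (hbc : b ≤ c)
    (hg : ∀ t ∈ Icc a b, HasDerivWithinAt g (F t (g t)) (Icc a b) t)
    (hf : ∀ t ∈ Icc b c, HasDerivWithinAt f (F t (f t)) (Icc b c) t) (hfg : g b = f b) :
    ∀ t ∈ Icc a c, HasDerivWithinAt (fun s => if s < b then g s else f s)
      (F t (if t < b then g t else f t)) (Icc a c) t := by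
  set φ : ℝ → E := fun s => if s < b then g s else f s
  have hφg : EqOn φ g (Icc a b) := fun s hs => by
    rcases hs.2.lt_or_eq with hsb | rfl
    · simp [φ, hsb]
    · simp [φ, hfg]
  have hφf : EqOn φ f (Icc b c) := fun s hs => by simp [φ, not_lt.2 hs.1]
  intro t ht
  have h₁ : HasDerivWithinAt φ (F t (φ t)) (Icc a b) t := by
    by_cases htb : t ∈ Icc a b
    · rw [hφg htb]; exact (hg t htb).congr hφg (hφg htb)
    · exact HasFDerivWithinAt.of_notMem_closure (by rwa [closure_Icc])
  have h₂ : HasDerivWithinAt φ (F t (φ t)) (Icc b c) t := by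
    by_cases htb : t ∈ Icc b c
    · rw [hφf htb]; exact (hf t htb).congr hφf (hφf htb)
    · exact HasFDerivWithinAt.of_notMem_closure (by rwa [closure_Icc])
  simpa only [Icc_union_Icc_eq_Icc hab hbc] using h₁.union h₂

theorem eqOn_Icc_of_hasDerivWithinAt_of_lipschitzWith
    (hlip : ∀ t ∈ Icc a b, LipschitzWith K (F t)) {f g : ℝ → E}
    (hf : ∀ t ∈ Icc a b, HasDerivWithinAt f (F t (f t)) (Icc a b) t)
    (hg : ∀ t ∈ Icc a b, HasDerivWithinAt g (F t (g t)) (Icc a b) t) (hb : f b = g b) :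
    EqOn f g (Icc a b) := by
  have hIic : ∀ t ∈ Ioc a b, Icc a b ∈ 𝓝[Iic t] t := fun t ht =>
    mem_of_superset (inter_mem_nhdsWithin _ (Ioi_mem_nhds ht.1)) fun s hs =>
      ⟨hs.2.le, hs.1.trans ht.2⟩
  exact ODE_solution_unique_of_mem_Icc_left (s := fun _ => univ)
    (fun t ht => (hlip t (Ioc_subset_Icc_self ht)).lipschitzOnWith)
    (fun t ht => (hf t ht).continuousWithinAt)
    (fun t ht => (hf t (Ioc_subset_Icc_self ht)).mono_of_mem_nhdsWithin (hIic t ht))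
    (fun _ _ => mem_univ _) (fun t ht => (hg t ht).continuousWithinAt)
    (fun t ht => (hg t (Ioc_subset_Icc_self ht)).mono_of_mem_nhdsWithin (hIic t ht))
    (fun _ _ => mem_univ _) hb

variable [CompleteSpace E]

/-- Since `F t 0 = 0`, the field grows at most linearly, so one step of Picard-Lindelöf has a
length `(2K + 1)⁻¹` independent of the initial value `x₀`. -/
theorem exists_hasDerivWithinAt_Icc_max_sub_of_lipschitzWith
    (hlip : ∀ t ∈ Icc a b, LipschitzWith K (F t)) (hcont : ∀ x, ContinuousOn (F · x) (Icc a b))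
    (hF0 : ∀ t ∈ Icc a b, F t 0 = 0) {s : ℝ} (hs : s ∈ Icc a b) (x₀ : E) :
    ∃ g : ℝ → E, g s = x₀ ∧ ∀ t ∈ Icc (max a (s - (2 * (K : ℝ) + 1)⁻¹)) s,
      HasDerivWithinAt g (F t (g t)) (Icc (max a (s - (2 * (K : ℝ) + 1)⁻¹)) s) t := by
  set τ : ℝ := (2 * (K : ℝ) + 1)⁻¹
  have hτ : 0 < τ := by positivity
  have hsub : Icc (max a (s - τ)) s ⊆ Icc a b := Icc_subset_Icc (le_max_left _ _) hs.2
  have hPL : IsPicardLindelof F (tmin := max a (s - τ)) (tmax := s)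
      ⟨s, max_le hs.1 (by linarith), le_rfl⟩ x₀ ‖x₀‖₊ 0 (2 * K * ‖x₀‖₊) K := by
    refine ⟨fun t ht => (hlip t (hsub ht)).lipschitzOnWith, fun x _ => (hcont x).mono hsub,
      fun t ht x hx => ?_, ?_⟩
    · have hx' : ‖x‖ ≤ 2 * ‖x₀‖ := by
        have := norm_le_norm_add_norm_sub' x x₀
        rw [Metric.mem_closedBall, dist_eq_norm, coe_nnnorm] at hx
        linarith
      calc ‖F t x‖ ≤ K * ‖x‖ := (hlip t (hsub ht)).norm_le_mul (hF0 t (hsub ht)) x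
        _ ≤ K * (2 * ‖x₀‖) := by gcongr
        _ = _ := by push_cast; ring
    · have hK : (2 * K : ℝ) * τ ≤ 1 := by
        rw [← div_eq_mul_inv, div_le_one (by positivity)]; linarith
      have hst : s - max a (s - τ) ≤ τ := by linarith [le_max_right a (s - τ)]
      simp only [sub_self, NNReal.coe_zero, sub_zero, coe_nnnorm]
      rw [max_eq_right (by linarith [max_le hs.1 (by linarith : s - τ ≤ s)])]
      push_cast
      calc 2 * K * ‖x₀‖ * (s - max a (s - τ)) ≤ 2 * K * ‖x₀‖ * τ := by gcongr
        _ = (2 * K * τ) * ‖x₀‖ := by ring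
        _ ≤ 1 * ‖x₀‖ := by gcongr
        _ = ‖x₀‖ := one_mul _
  exact hPL.exists_eq_forall_mem_Icc_hasDerivWithinAt₀

theorem exists_hasDerivWithinAt_Icc_of_lipschitzWith (hab : a ≤ b)
    (hlip : ∀ t ∈ Icc a b, LipschitzWith K (F t)) (hcont : ∀ x, ContinuousOn (F · x) (Icc a b))
    (hF0 : ∀ t ∈ Icc a b, F t 0 = 0) (x₀ : E) :
    ∃ g : ℝ → E, g b = x₀ ∧ ∀ t ∈ Icc a b, HasDerivWithinAt g (F t (g t)) (Icc a b) t := by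
  set τ : ℝ := (2 * (K : ℝ) + 1)⁻¹
  have hτ : 0 < τ := by positivity
  have hchain : ∀ m : ℕ, ∃ g : ℝ → E, g b = x₀ ∧ ∀ t ∈ Icc (max a (b - (m + 1) * τ)) b,
      HasDerivWithinAt g (F t (g t)) (Icc (max a (b - (m + 1) * τ)) b) t := by
    intro m
    induction m with
    | zero => simpa only [Nat.cast_zero, zero_add, one_mul] using
        exists_hasDerivWithinAt_Icc_max_sub_of_lipschitzWith hlip hcont hF0 ⟨hab, le_rfl⟩ x₀
    | succ m ih =>
      obtain ⟨g, hgb, hg⟩ := ih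
      set s := max a (b - (m + 1) * τ)
      have hs : s ∈ Icc a b := ⟨le_max_left _ _, max_le hab (by nlinarith)⟩
      obtain ⟨g', hg's, hg'⟩ :=
        exists_hasDerivWithinAt_Icc_max_sub_of_lipschitzWith hlip hcont hF0 hs (g s)
      have hnext : max a (s - τ) = max a (b - ((m + 1 : ℕ) + 1) * τ) := by
        rw [← max_sub_sub_right, ← max_assoc, max_eq_left (sub_le_self a hτ.le)]
        push_cast; ring_nf
      rw [hnext] at hg'
      refine ⟨_, by simp [hgb, not_lt.2 hs.2], hasDerivWithinAt_Icc_ite ?_ hs.2 hg' hg hg's⟩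
      rw [← hnext]
      exact max_le (le_max_left _ _) (by linarith [le_max_right a (b - (m + 1) * τ)])
  obtain ⟨m, hm⟩ := exists_nat_ge ((b - a) / τ)
  have hma : max a (b - (m + 1) * τ) = a := by
    rw [div_le_iff₀ hτ] at hm
    exact max_eq_left (by nlinarith)
  simpa only [hma] using hchain m

theorem exists_hasDerivWithinAt_Ioc_of_continuousOn {A : ℝ → E →L[ℝ] E} (hab : a < b)
    (hA : ContinuousOn A (Ioc a b)) (x₀ : E) :
    ∃ f : ℝ → E, f b = x₀ ∧ ∀ t ∈ Ioc a b, HasDerivWithinAt f (A t (f t)) (Ioc a b) t := by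
  have hlip : ∀ c ∈ Ioc a b, ∃ K : ℝ≥0, ∀ t ∈ Icc c b, LipschitzWith K (A t) := by
    intro c hc
    obtain ⟨C, hC⟩ := isCompact_Icc.exists_bound_of_continuousOn
      (hA.mono (Icc_subset_Ioc_iff hc.2 |>.2 ⟨hc.1, le_rfl⟩))
    refine ⟨C.toNNReal, fun t ht => (A t).lipschitz.weaken ?_⟩
    rw [← NNReal.coe_le_coe, coe_nnnorm]
    exact (hC t ht).trans (Real.le_coe_toNNReal C)
  have hsol : ∀ c ∈ Ioc a b, ∃ g : ℝ → E, g b = x₀ ∧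
      ∀ t ∈ Icc c b, HasDerivWithinAt g (A t (g t)) (Icc c b) t := by
    intro c hc
    obtain ⟨K, hK⟩ := hlip c hc
    have hAc := hA.mono (Icc_subset_Ioc_iff hc.2 |>.2 ⟨hc.1, le_rfl⟩)
    exact exists_hasDerivWithinAt_Icc_of_lipschitzWith hc.2 hK
      (fun x => hAc.clm_apply continuousOn_const) (fun t _ => map_zero _) x₀
  choose! sol hsol_b hsol using hsol
  have hagree : ∀ c ∈ Ioc a b, EqOn (fun t => sol t t) (sol c) (Icc c b) := by
    intro c hc t ht
    have ht' : t ∈ Ioc a b := ⟨hc.1.trans_le ht.1, ht.2⟩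
    obtain ⟨K, hK⟩ := hlip t ht'
    refine eqOn_Icc_of_hasDerivWithinAt_of_lipschitzWith hK (hsol t ht')
      (fun s hs => (hsol c hc s ⟨ht.1.trans hs.1, hs.2⟩).mono (Icc_subset_Icc_left ht.1)) ?_
      ⟨le_rfl, ht.2⟩
    rw [hsol_b t ht', hsol_b c hc]
  refine ⟨fun t => sol t t, hsol_b b ⟨hab, le_rfl⟩, fun t ht => ?_⟩
  obtain ⟨c, hac, hct⟩ := exists_between ht.1
  have hc : c ∈ Ioc a b := ⟨hac, hct.le.trans ht.2⟩
  have hd := (hsol c hc t ⟨hct.le, ht.2⟩).congr (hagree c hc) (hagree c hc ⟨hct.le, ht.2⟩)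
  rw [← hagree c hc ⟨hct.le, ht.2⟩] at hd
  exact hd.mono_of_mem_nhdsWithin (mem_of_superset (inter_mem_nhdsWithin _ (Ioi_mem_nhds hct))
    fun s hs => ⟨hs.2.le, hs.1.2⟩)

end LipschitzODE

def driftCoeff (n : ℕ) (ε r : ℝ) : ℝ := ((n:ℝ) - 2)/r + 2*r/(ε + r^2)

def potentialCoeff (n : ℕ) (γ ε r : ℝ) : ℝ := ((n:ℝ) - 2)/r^2 + 2/(γ*(ε + r^2))

section Operator

variable {n : ℕ} {γ ε : ℝ}

theorem Lop_eq (f : ℝ → ℝ) (r : ℝ) :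
    Lop n γ ε f r = deriv (deriv f) r + driftCoeff n ε r * deriv f r
      - potentialCoeff n γ ε r * f r := rfl

theorem potentialCoeff_pos (hn : 2 ≤ n) (hγ : 0 < γ) (hε : 0 < ε) (r : ℝ) :
    0 < potentialCoeff n γ ε r := by
  have : (0:ℝ) ≤ n - 2 := by rw [sub_nonneg]; exact_mod_cast hn
  unfold potentialCoeff; positivity

theorem Lop_eq_of_hasDerivAt {f f' : ℝ → ℝ} {f'' r : ℝ}
    (hf : ∀ᶠ x in 𝓝 r, HasDerivAt f (f' x) x) (hf' : HasDerivAt f' f'' r) :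
    Lop n γ ε f r = f'' + driftCoeff n ε r * f' r - potentialCoeff n γ ε r * f r := by
  have hderiv : deriv f =ᶠ[𝓝 r] f' := hf.mono fun x hx => hx.deriv
  rw [Lop_eq, hderiv.deriv_eq, hderiv.eq_of_nhds, hf'.deriv]

theorem Filter.EventuallyEq.Lop_eq {f g : ℝ → ℝ} {r : ℝ} (h : f =ᶠ[𝓝 r] g) :
    Lop n γ ε f r = Lop n γ ε g r := by
  rw [_root_.Lop_eq, _root_.Lop_eq, h.deriv.deriv_eq, h.deriv_eq, h.eq_of_nhds]

theorem Lop_sub {f g : ℝ → ℝ} {r : ℝ} (hf : ContDiffAt ℝ 2 f r) (hg : ContDiffAt ℝ 2 g r) :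
    Lop n γ ε (f - g) r = Lop n γ ε f r - Lop n γ ε g r := by
  have hd : ∀ {φ : ℝ → ℝ}, ContDiffAt ℝ 2 φ r →
      (∀ᶠ x in 𝓝 r, HasDerivAt φ (deriv φ x) x) ∧ HasDerivAt (deriv φ) (deriv (deriv φ) r) r :=
    fun hφ => ⟨(hφ.eventually (by simp)).mono fun x hx =>
      (hx.differentiableAt (by simp)).hasDerivAt,
      ((hφ.derivWithin (m := 1) (by norm_num)).differentiableAt one_ne_zero).hasDerivAt⟩
  obtain ⟨hf₁, hf₂⟩ := hd hf
  obtain ⟨hg₁, hg₂⟩ := hd hg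
  rw [Lop_eq_of_hasDerivAt (f' := fun x => deriv f x - deriv g x)
    (hf₁.and hg₁ |>.mono fun x hx => hx.1.sub hx.2) (hf₂.sub hg₂), Lop_eq, Lop_eq, Pi.sub_apply]
  ring

theorem Lop_le_of_isLocalMax {w : ℝ → ℝ} {r : ℝ} (hmax : IsLocalMax w r) (hc : ContinuousAt w r) :
    Lop n γ ε w r ≤ -(potentialCoeff n γ ε r * w r) := by
  rw [Lop_eq, hmax.deriv_eq_zero]
  linarith [hmax.deriv_deriv_nonpos hc]

section MaximumPrinciple

variable (hn : 2 ≤ n) (hγ : 0 < γ) (hε : 0 < ε) {x y : ℝ}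
include hn hγ hε

theorem nonpos_of_Lop_nonneg {w : ℝ → ℝ} (hw : ContinuousOn w (Icc x y))
    (hL : ∀ r ∈ Ioo x y, 0 ≤ Lop n γ ε w r) (hx : w x ≤ 0) (hy : w y ≤ 0) :
    ∀ r ∈ Icc x y, w r ≤ 0 := by
  by_contra! ⟨r, hr, hwr⟩
  obtain ⟨m, hm, hmax⟩ := isCompact_Icc.exists_isMaxOn ⟨r, hr⟩ hw
  have hwm : 0 < w m := hwr.trans_le (hmax hr)
  have hm' : m ∈ Ioo x y :=
    ⟨hm.1.lt_of_ne (by rintro rfl; linarith), hm.2.lt_of_ne (by rintro rfl; linarith)⟩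
  have hmax' : IsLocalMax w m := hmax.isLocalMax (Icc_mem_nhds hm'.1 hm'.2)
  have := Lop_le_of_isLocalMax (n := n) (γ := γ) (ε := ε) hmax'
    (hw.continuousAt (Icc_mem_nhds hm'.1 hm'.2))
  nlinarith [hL m hm', potentialCoeff_pos hn hγ hε m]

theorem neg_of_Lop_pos {w : ℝ → ℝ} (hw : ContinuousOn w (Icc x y))
    (hL : ∀ r ∈ Ioo x y, 0 < Lop n γ ε w r) (hx : w x ≤ 0) (hy : w y ≤ 0) :
    ∀ r ∈ Ioo x y, w r < 0 := by
  have hle := nonpos_of_Lop_nonneg hn hγ hε hw (fun r hr => (hL r hr).le) hx hy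
  refine fun r hr => (hle r (Ioo_subset_Icc_self hr)).lt_of_ne fun hwr => ?_
  have hmax : IsLocalMax w r :=
    (show IsMaxOn w (Icc x y) r from fun s hs => hwr ▸ hle s hs).isLocalMax
      (Icc_mem_nhds hr.1 hr.2)
  have := Lop_le_of_isLocalMax (n := n) (γ := γ) (ε := ε) hmax
    (hw.continuousAt (Icc_mem_nhds hr.1 hr.2))
  rw [hwr, mul_zero, neg_zero] at this
  linarith [hL r hr]

variable {f g : ℝ → ℝ} (hf : ContinuousOn f (Icc x y)) (hg : ContinuousOn g (Icc x y))
  (hf₂ : ∀ r ∈ Ioo x y, ContDiffAt ℝ 2 f r) (hg₂ : ∀ r ∈ Ioo x y, ContDiffAt ℝ 2 g r)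
include hf hg hf₂ hg₂

theorem le_of_Lop_le (hL : ∀ r ∈ Ioo x y, Lop n γ ε g r ≤ Lop n γ ε f r)
    (hx : f x ≤ g x) (hy : f y ≤ g y) : ∀ r ∈ Icc x y, f r ≤ g r := by
  have := nonpos_of_Lop_nonneg hn hγ hε (hf.sub hg)
    (fun r hr => by rw [Lop_sub (hf₂ r hr) (hg₂ r hr)]; linarith [hL r hr])
    (by simpa using hx) (by simpa using hy)
  exact fun r hr => sub_nonpos.mp (this r hr)

theorem lt_of_Lop_lt (hL : ∀ r ∈ Ioo x y, Lop n γ ε g r < Lop n γ ε f r)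
    (hx : f x ≤ g x) (hy : f y ≤ g y) : ∀ r ∈ Ioo x y, f r < g r := by
  have := neg_of_Lop_pos hn hγ hε (hf.sub hg)
    (fun r hr => by rw [Lop_sub (hf₂ r hr) (hg₂ r hr)]; linarith [hL r hr])
    (by simpa using hx) (by simpa using hy)
  exact fun r hr => sub_neg.mp (this r hr)

end MaximumPrinciple

theorem alphaN_sq_add (hn : 2 ≤ n) (hγ : 0 < γ) :
    alphaN n γ ^ 2 + ((n:ℝ) - 1) * alphaN n γ = (n:ℝ) - 2 + 2 / γ := by
  have hn' : (2:ℝ) ≤ n := by exact_mod_cast hn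
  have : 0 ≤ (n:ℝ) - 2 + 2 / γ := by linarith [div_pos two_pos hγ]
  have hD := Real.sq_sqrt (add_nonneg (sq_nonneg ((n:ℝ) - 1)) (mul_nonneg zero_le_four this))
  unfold alphaN
  nlinarith [hD]

theorem inv_lt_alphaN (hn : 2 ≤ n) (hγ : 1 < γ) : γ⁻¹ < alphaN n γ := by
  have hn' : (2:ℝ) ≤ n := by exact_mod_cast hn
  have hγ' : γ⁻¹ < 1 := inv_lt_one_of_one_lt₀ hγ
  have hγ0 : 0 < γ⁻¹ := by positivity
  have hsq : (2 * γ⁻¹ + (n - 1)) ^ 2 < ((n:ℝ) - 1) ^ 2 + 4 * ((n:ℝ) - 2 + 2 / γ) := by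
    rw [div_eq_mul_inv]; nlinarith
  have := Real.lt_sqrt (by linarith) |>.mpr hsq
  unfold alphaN; linarith

theorem alphaN_pos (hn : 2 ≤ n) (hγ : 1 < γ) : 0 < alphaN n γ :=
  (inv_pos.2 (zero_lt_one.trans hγ)).trans (inv_lt_alphaN hn hγ)

theorem Lop_id_pos (hγ : 1 < γ) (hε : 0 < ε) {r : ℝ} (hr : 0 < r) :
    0 < Lop n γ ε (fun x => x) r := by
  rw [Lop_eq_of_hasDerivAt (f' := fun _ => 1) (f'' := 0)
    (Eventually.of_forall fun x => hasDerivAt_id' x) (hasDerivAt_const r 1)]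
  have : driftCoeff n ε r * 1 - potentialCoeff n γ ε r * r
      = 2 * r * (γ - 1) / (γ * (ε + r ^ 2)) := by
    unfold driftCoeff potentialCoeff
    field_simp
    ring
  rw [zero_add, this]
  have : 0 < γ - 1 := by linarith
  positivity

theorem Lop_rpow_alphaN_neg (hn : 2 ≤ n) (hγ : 1 < γ) (hε : 0 < ε) {r : ℝ} (hr : 0 < r) :
    Lop n γ ε (fun x => x ^ alphaN n γ) r < 0 := by
  have hγ0 : 0 < γ := by linarith
  have hα := inv_lt_alphaN hn hγ
  set α := alphaN n γ
  have hq : γ * (α ^ 2 + ((n:ℝ) - 1) * α) = γ * ((n:ℝ) - 2) + 2 := by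
    rw [alphaN_sq_add hn hγ0]; field_simp
  rw [Lop_eq_of_hasDerivAt (f' := fun x => α * x ^ (α - 1)) (f'' := α * ((α - 1) * r ^ (α - 2)))
    ((eventually_gt_nhds hr).mono fun x hx => Real.hasDerivAt_rpow_const (Or.inl hx.ne'))
    (by simpa [sub_sub, one_add_one_eq_two] using
      (Real.hasDerivAt_rpow_const (p := α - 1) (Or.inl hr.ne')).const_mul α)]
  have e1 : r ^ (α - 1) = r ^ (α - 2) * r := by
    rw [← Real.rpow_add_one hr.ne']; ring_nf
  have e2 : r ^ α = r ^ (α - 2) * r ^ 2 := by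
    rw [← Real.rpow_natCast, ← Real.rpow_add hr]; ring_nf
  -- the `r ^ (α - 2)` terms cancel because `α` solves `α² + (n-1)α = n - 2 + 2/γ`
  have key : α * ((α - 1) * r ^ (α - 2)) + driftCoeff n ε r * (α * r ^ (α - 1))
      - potentialCoeff n γ ε r * r ^ α = -(2 * (α - γ⁻¹) * ε * r ^ (α - 2) / (ε + r ^ 2)) := by
    rw [e1, e2]
    unfold driftCoeff potentialCoeff
    field_simp
    linear_combination (ε + r ^ 2) * hq
  rw [key, neg_neg_iff_pos]
  have : 0 < α - γ⁻¹ := sub_pos.mpr hα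
  positivity

theorem Lop_cubic_neg (hγ : 1 < γ) (hε : 0 < ε) {A M r : ℝ} (hA : 0 < A) (hM : ε⁻¹ ≤ M)
    (hr : 0 < r) : Lop n γ ε (fun x => A * (x - M * x ^ 3)) r < 0 := by
  have hγ0 : 0 < γ := by linarith
  rw [Lop_eq_of_hasDerivAt (f' := fun x => A * (1 - M * (3 * x ^ 2)))
    (f'' := -(A * (M * (3 * (2 * r)))))
    (Eventually.of_forall fun x => by
      simpa using ((hasDerivAt_id' x).sub ((hasDerivAt_pow 3 x).const_mul M)).const_mul A)
    (by simpa [mul_assoc] using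
      ((hasDerivAt_const r 1).sub (((hasDerivAt_pow 2 r).const_mul 3).const_mul M)).const_mul A)]
  have key : -(A * (M * (3 * (2 * r)))) + driftCoeff n ε r * (A * (1 - M * (3 * r ^ 2)))
      - potentialCoeff n γ ε r * (A * (r - M * r ^ 3)) = A * (2 * r * (γ - 1) / (γ * (ε + r ^ 2))
        - M * (2 * n + 2) * r - M * (6 - 2 / γ) * r ^ 3 / (ε + r ^ 2)) := by
    unfold driftCoeff potentialCoeff
    field_simp
    ring
  rw [key]
  refine mul_neg_of_pos_of_neg hA ?_
  have h₁ : 2 * r * (γ - 1) / (γ * (ε + r ^ 2)) < 2 * r / ε := by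
    rw [div_lt_div_iff₀ (by positivity) hε]
    nlinarith [mul_pos (mul_pos hr hε) hε, mul_pos hγ0 (mul_pos hr (pow_pos hr 2))]
  have h₂ : 2 * r / ε ≤ M * (2 * n + 2) * r := by
    have hM0 : 0 < M := (inv_pos.mpr hε).trans_le hM
    calc 2 * r / ε = 2 * r * ε⁻¹ := div_eq_mul_inv _ _
      _ ≤ 2 * r * M := by gcongr
      _ ≤ M * (2 * n + 2) * r := by nlinarith [mul_nonneg (mul_nonneg n.cast_nonneg hM0.le) hr.le]
  have h₃ : 0 ≤ M * (6 - 2 / γ) * r ^ 3 / (ε + r ^ 2) := by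
    have : 2 / γ < 6 := by rw [div_lt_iff₀ hγ0]; linarith
    have : 0 < M := (inv_pos.mpr hε).trans_le hM
    have : 0 < 6 - 2 / γ := by linarith
    positivity
  linarith

end Operator

/-- `L h = 0` on `(0, ∞)` is the first-order system `(h, h')' = odeSystem n γ ε r (h, h')`. -/
def odeSystem (n : ℕ) (γ ε r : ℝ) : ℝ × ℝ →L[ℝ] ℝ × ℝ :=
  (ContinuousLinearMap.snd ℝ ℝ ℝ).prod
    (potentialCoeff n γ ε r • ContinuousLinearMap.fst ℝ ℝ ℝ
      - driftCoeff n ε r • ContinuousLinearMap.snd ℝ ℝ ℝ)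

@[simp]
theorem odeSystem_apply (n : ℕ) (γ ε r : ℝ) (v : ℝ × ℝ) :
    odeSystem n γ ε r v = (v.2, potentialCoeff n γ ε r * v.1 - driftCoeff n ε r * v.2) := rfl

theorem continuousOn_odeSystem {n : ℕ} {γ ε : ℝ} (hγ : 0 < γ) (hε : 0 < ε) :
    ContinuousOn (odeSystem n γ ε) (Ioi 0) := by
  have hpos : ∀ r : ℝ, 0 < ε + r ^ 2 := fun r => by positivity
  have hB : ContinuousOn (driftCoeff n ε) (Ioi 0) := by
    unfold driftCoeff
    exact ContinuousOn.add (continuousOn_const.div continuousOn_id fun r hr => ne_of_gt hr)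
      ((continuousOn_const.mul continuousOn_id).div (by fun_prop) fun r _ => (hpos r).ne')
  have hC : ContinuousOn (potentialCoeff n γ ε) (Ioi 0) := by
    unfold potentialCoeff
    exact ContinuousOn.add
      (continuousOn_const.div (by fun_prop) fun r hr => pow_ne_zero 2 (ne_of_gt hr))
      (continuousOn_const.div (by fun_prop) fun r _ => (mul_pos hγ (hpos r)).ne')
  exact (ContinuousLinearMap.prodₗᵢ ℝ).continuous.comp_continuousOn
    (continuousOn_const.prodMk ((hC.smul continuousOn_const).sub (hB.smul continuousOn_const)))

def IsODESolIoc (n : ℕ) (γ ε : ℝ) (h : ℝ → ℝ) : Prop :=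
  ContinuousOn h (Ioc (0:ℝ) 1) ∧ (∀ r ∈ Ioo (0:ℝ) 1, ContDiffAt ℝ 2 h r) ∧
    (∀ r ∈ Ioo (0:ℝ) 1, Lop n γ ε h r = 0) ∧ h 1 = 1

theorem isODESolIoc_fst {n : ℕ} {γ ε : ℝ} (hγ : 0 < γ) (hε : 0 < ε) {f : ℝ → ℝ × ℝ}
    (hf : ∀ r ∈ Ioc (0:ℝ) 1, HasDerivWithinAt f (odeSystem n γ ε r (f r)) (Ioc 0 1) r)
    (hf₁ : (f 1).1 = 1) : IsODESolIoc n γ ε fun r => (f r).1 := by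
  have hfc : ContinuousOn f (Ioc 0 1) := fun r hr => (hf r hr).continuousWithinAt
  have hderiv : ∀ r ∈ Ioo (0:ℝ) 1, HasDerivAt f (odeSystem n γ ε r (f r)) r := fun r hr =>
    (hf r (Ioo_subset_Ioc_self hr)).hasDerivAt (Ioc_mem_nhds hr.1 hr.2)
  have hfst : ∀ r ∈ Ioo (0:ℝ) 1, HasDerivAt (fun r => (f r).1) (f r).2 r := fun r hr =>
    (ContinuousLinearMap.fst ℝ ℝ ℝ).hasFDerivAt.comp_hasDerivAt r (hderiv r hr)
  have hsnd : ∀ r ∈ Ioo (0:ℝ) 1, HasDerivAt (fun r => (f r).2)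
      (potentialCoeff n γ ε r * (f r).1 - driftCoeff n ε r * (f r).2) r := fun r hr =>
    (ContinuousLinearMap.snd ℝ ℝ ℝ).hasFDerivAt.comp_hasDerivAt r (hderiv r hr)
  have hfC1 : ContDiffOn ℝ 1 f (Ioo 0 1) := by
    rw [show (1 : WithTop ℕ∞) = 0 + 1 from rfl, contDiffOn_succ_iff_deriv_of_isOpen isOpen_Ioo]
    refine ⟨fun r hr => (hderiv r hr).differentiableAt.differentiableWithinAt, by simp, ?_⟩
    rw [contDiffOn_zero]
    exact (((continuousOn_odeSystem hγ hε).mono fun r hr => hr.1).clm_apply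
      (hfc.mono Ioo_subset_Ioc_self)).congr fun r hr => (hderiv r hr).deriv
  have hh₂ : ContDiffOn ℝ 2 (fun r => (f r).1) (Ioo 0 1) := by
    rw [show (2 : WithTop ℕ∞) = 1 + 1 from rfl, contDiffOn_succ_iff_deriv_of_isOpen isOpen_Ioo]
    exact ⟨fun r hr => (hfst r hr).differentiableAt.differentiableWithinAt, by simp,
      (contDiff_snd.comp_contDiffOn hfC1).congr fun r hr => (hfst r hr).deriv⟩
  refine ⟨fun r hr => (hfc r hr).fst, fun r hr => hh₂.contDiffAt (isOpen_Ioo.mem_nhds hr),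
    fun r hr => ?_, hf₁⟩
  rw [Lop_eq_of_hasDerivAt (eventually_of_mem (isOpen_Ioo.mem_nhds hr) hfst) (hsnd r hr)]
  ring

section Shooting

variable {n : ℕ} {γ ε : ℝ}

theorem exists_shooting_family (hγ : 0 < γ) (hε : 0 < ε) :
    ∃ H : ℝ → ℝ → ℝ, (∀ t, IsODESolIoc n γ ε (H t)) ∧ (∀ r, Continuous fun t => H t r) ∧
      ∃ r₁ ∈ Ioo (0:ℝ) 1, Function.Surjective fun t => H t r₁ := by
  have hA := (continuousOn_odeSystem (n := n) hγ hε).mono fun r (hr : r ∈ Ioc (0:ℝ) 1) => hr.1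
  obtain ⟨u, hu₁, hu⟩ := exists_hasDerivWithinAt_Ioc_of_continuousOn one_pos hA ((1:ℝ), (0:ℝ))
  obtain ⟨z, hz₁, hz⟩ := exists_hasDerivWithinAt_Ioc_of_continuousOn one_pos hA ((0:ℝ), (1:ℝ))
  -- `(z ·).1` vanishes at `1` with derivative `1` there, so it is nonzero just to the left of `1`
  obtain ⟨r₁, hr₁, hz₁r₁⟩ : ∃ r₁ ∈ Ioo (0:ℝ) 1, (z r₁).1 ≠ 0 := by
    have hderiv : HasDerivWithinAt (fun r => (z r).1) 1 (Ioc 0 1) 1 := by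
      have := (ContinuousLinearMap.fst ℝ ℝ ℝ).hasFDerivAt.comp_hasDerivWithinAt 1
        (hz 1 ⟨one_pos, le_rfl⟩)
      simp only [odeSystem_apply, hz₁] at this
      exact this
    have hne := hderiv.eventually_ne (c := 0) one_ne_zero
    rw [Ioc_sdiff_right] at hne
    have : (𝓝[Ioo (0:ℝ) 1] 1).NeBot := by rw [nhdsWithin_Ioo_eq_nhdsLT one_pos]; infer_instance
    exact (hne.and self_mem_nhdsWithin).exists.imp fun r hr => ⟨hr.2, hr.1⟩
  refine ⟨fun t r => (u r + t • z r).1, fun t => isODESolIoc_fst hγ hε (fun r hr => ?_)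
    (by simp [hu₁, hz₁]), fun r => by fun_prop, r₁, hr₁, fun y => ⟨(y - (u r₁).1) / (z r₁).1, ?_⟩⟩
  · show HasDerivWithinAt _ (odeSystem n γ ε r (u r + t • z r)) _ _
    rw [map_add, map_smul]
    exact (hu r hr).add ((hz r hr).const_smul t)
  · simp [div_mul_cancel₀ _ hz₁r₁]

theorem IsODESolIoc.nonneg_of_nonneg (hn : 2 ≤ n) (hγ : 0 < γ) (hε : 0 < ε) {h : ℝ → ℝ}
    (hsol : IsODESolIoc n γ ε h) {x : ℝ} (hx : x ∈ Ioo (0:ℝ) 1) (hhx : 0 ≤ h x) :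
    ∀ r ∈ Icc x 1, 0 ≤ h r := by
  obtain ⟨hc, hC2, hL, h1⟩ := hsol
  have hsub : Ioo x 1 ⊆ Ioo 0 1 := Ioo_subset_Ioo_left hx.1.le
  exact le_of_Lop_le hn hγ hε continuousOn_const (hc.mono (Icc_subset_Ioc hx.1 le_rfl))
    (fun _ _ => contDiffAt_const) (fun r hr => hC2 r (hsub hr))
    (fun r hr => by rw [hL r (hsub hr)]; simp [Lop]) hhx (by simp [h1])

theorem IsODESolIoc.le_rpow_of_le (hn : 2 ≤ n) (hγ : 1 < γ) (hε : 0 < ε) {h : ℝ → ℝ}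
    (hsol : IsODESolIoc n γ ε h) {x : ℝ} (hx : x ∈ Ioo (0:ℝ) 1) (hhx : h x ≤ x ^ alphaN n γ) :
    ∀ r ∈ Icc x 1, h r ≤ r ^ alphaN n γ := by
  obtain ⟨hc, hC2, hL, h1⟩ := hsol
  have hsub : Ioo x 1 ⊆ Ioo 0 1 := Ioo_subset_Ioo_left hx.1.le
  exact le_of_Lop_le hn (zero_lt_one.trans hγ) hε (hc.mono (Icc_subset_Ioc hx.1 le_rfl))
    (Real.continuous_rpow_const (alphaN_pos hn hγ).le).continuousOn
    (fun r hr => hC2 r (hsub hr))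
    (fun r hr => Real.contDiffAt_rpow_const_of_ne (hx.1.trans hr.1).ne')
    (fun r hr => by rw [hL r (hsub hr)]; exact (Lop_rpow_alphaN_neg hn hγ hε (hx.1.trans hr.1)).le)
    hhx (by simp [h1])

theorem exists_isODESolIoc_nonneg_le_rpow (hn : 2 ≤ n) (hγ : 1 < γ) (hε : 0 < ε) :
    ∃ h, IsODESolIoc n γ ε h ∧ ∀ r ∈ Ioo (0:ℝ) 1, 0 ≤ h r ∧ h r ≤ r ^ alphaN n γ := by
  have hγ0 : 0 < γ := zero_lt_one.trans hγ
  obtain ⟨H, hH, hcont, r₁, hr₁, hsurj⟩ := exists_shooting_family (n := n) hγ0 hε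
  set A := {t | ∃ r ∈ Ioo (0:ℝ) 1, H t r < 0}
  set B := {t | ∃ r ∈ Ioo (0:ℝ) 1, r ^ alphaN n γ < H t r}
  have hA : IsOpen A := isOpen_iff_forall_mem_open.mpr fun _ ⟨r, hr, hneg⟩ =>
    ⟨_, fun _ ht => ⟨r, hr, ht⟩, isOpen_lt (hcont r) continuous_const, hneg⟩
  have hB : IsOpen B := isOpen_iff_forall_mem_open.mpr fun _ ⟨r, hr, hbig⟩ =>
    ⟨_, fun _ ht => ⟨r, hr, ht⟩, isOpen_lt continuous_const (hcont r), hbig⟩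
  obtain ⟨tA, htA⟩ := hsurj (-1)
  obtain ⟨tB, htB⟩ := hsurj (r₁ ^ alphaN n γ + 1)
  have hAB : ∀ t ∈ A, t ∉ B := by
    rintro t ⟨ra, hra, hneg⟩ ⟨rb, hrb, hbig⟩
    have hrpow : ∀ r : ℝ, 0 < r → 0 < r ^ alphaN n γ := fun r hr => Real.rpow_pos_of_pos hr _
    rcases le_or_gt rb ra with hba | hab
    · linarith [(hH t).nonneg_of_nonneg hn hγ0 hε hrb (hrpow rb hrb.1 |>.trans hbig).le ra
        ⟨hba, hra.2.le⟩]
    · linarith [(hH t).le_rpow_of_le hn hγ hε hra (hneg.le.trans (hrpow ra hra.1).le) rb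
        ⟨hab.le, hrb.2.le⟩]
  obtain ⟨t, -, ht⟩ := not_subset.mp fun hcover => by
    obtain ⟨t, -, htA, htB⟩ := isPreconnected_univ A B hA hB hcover
      ⟨tA, trivial, r₁, hr₁, by simp only at htA; linarith⟩
      ⟨tB, trivial, r₁, hr₁, by simp only at htB; linarith⟩
    exact hAB t htA htB
  exact ⟨H t, hH t, fun r hr => ⟨not_lt.mp fun hlt => ht (Or.inl ⟨r, hr, hlt⟩),
    not_lt.mp fun hlt => ht (Or.inr ⟨r, hr, hlt⟩)⟩⟩

end Shooting

section Solution

variable {n : ℕ} {γ ε : ℝ}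

theorem IsODESolIoc.isODESol_update {h : ℝ → ℝ} (hsol : IsODESolIoc n γ ε h) {p : ℝ}
    (hp : 0 < p) (hbound : ∀ r ∈ Ioo (0:ℝ) 1, 0 ≤ h r ∧ h r ≤ r ^ p) :
    IsODESol n γ ε (Function.update h 0 0) := by
  obtain ⟨hc, hC2, hL, h1⟩ := hsol
  have heq : ∀ r ∈ Ioo (0:ℝ) 1, Function.update h 0 0 =ᶠ[𝓝 r] h := fun r hr =>
    (Function.update_eventuallyEq h 0 0).filter_mono
      (le_principal_iff.2 (compl_singleton_mem_nhds hr.1.ne'))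
  refine ⟨?_, fun r hr => (hC2 r hr).congr_of_eventuallyEq (heq r hr),
    fun r hr => (heq r hr).Lop_eq.trans (hL r hr), Function.update_self .., by
      rw [Function.update_of_ne one_ne_zero, h1]⟩
  rw [continuousOn_update_iff, Icc_sdiff_left]
  have hbound' : ∀ r ∈ Ioc (0:ℝ) 1, 0 ≤ h r ∧ h r ≤ r ^ p := fun r hr => by
    rcases hr.2.lt_or_eq with hr1 | rfl
    · exact hbound r ⟨hr.1, hr1⟩
    · simp [h1]
  refine ⟨hc, fun _ => squeeze_zero' (eventually_nhdsWithin_of_forall fun r hr => (hbound' r hr).1)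
    (eventually_nhdsWithin_of_forall fun r hr => (hbound' r hr).2) ?_⟩
  simpa [Real.zero_rpow hp.ne'] using
    ((Real.continuous_rpow_const hp.le).tendsto 0).mono_left nhdsWithin_le_nhds

variable (hn : 2 ≤ n) (hγ : 1 < γ) (hε : 0 < ε) {h : ℝ → ℝ} (hsol : IsODESol n γ ε h)
include hn hγ hε hsol

theorem IsODESol.self_lt : ∀ r ∈ Ioo (0:ℝ) 1, r < h r := by
  obtain ⟨hc, hC2, hL, h0, h1⟩ := hsol
  exact lt_of_Lop_lt (f := fun x => x) hn (zero_lt_one.trans hγ) hε (continuousOn_id' _) hc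
    (fun _ _ => contDiffAt_id) hC2 (fun r hr => by rw [hL r hr]; exact Lop_id_pos hγ hε hr.1)
    (by simp [h0]) (by simp [h1])

theorem IsODESol.lt_rpow_alphaN : ∀ r ∈ Ioo (0:ℝ) 1, h r < r ^ alphaN n γ := by
  obtain ⟨hc, hC2, hL, h0, h1⟩ := hsol
  exact lt_of_Lop_lt hn (zero_lt_one.trans hγ) hε hc
    (Real.continuous_rpow_const (alphaN_pos hn hγ).le).continuousOn
    hC2 (fun r hr => Real.contDiffAt_rpow_const_of_ne hr.1.ne')
    (fun r hr => by rw [hL r hr]; exact Lop_rpow_alphaN_neg hn hγ hε hr.1)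
    (by simp [h0, Real.zero_rpow (alphaN_pos hn hγ).ne']) (by simp [h1])

theorem IsODESol.strictMonoOn : StrictMonoOn h (Icc 0 1) := by
  have hlt := hsol.self_lt hn hγ hε
  obtain ⟨hc, -, hL, h0, h1⟩ := hsol
  refine strictMonoOn_Icc_of_forall_not_isLocalMax hc (fun r hr => ?_) fun r hr hmax => ?_
  · rw [h0]
    rcases hr.2.lt_or_eq with hr1 | rfl
    · exact hr.1.trans (hlt r ⟨hr.1, hr1⟩)
    · rw [h1]; exact one_pos
  · have := Lop_le_of_isLocalMax (n := n) (γ := γ) (ε := ε) hmax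
      (hc.continuousAt (Icc_mem_nhds hr.1 hr.2))
    rw [hL r hr] at this
    nlinarith [potentialCoeff_pos hn (zero_lt_one.trans hγ) hε r, hlt r hr, hr.1]

theorem IsODESol.eqOn {h' : ℝ → ℝ} (hsol' : IsODESol n γ ε h') : EqOn h' h (Icc 0 1) := by
  obtain ⟨hc, hC2, hL, h0, h1⟩ := hsol
  obtain ⟨hc', hC2', hL', h0', h1'⟩ := hsol'
  have hγ0 : 0 < γ := zero_lt_one.trans hγ
  have hLeq : ∀ r ∈ Ioo (0:ℝ) 1, Lop n γ ε h r = Lop n γ ε h' r := fun r hr =>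
    (hL r hr).trans (hL' r hr).symm
  exact fun r hr => le_antisymm
    (le_of_Lop_le hn hγ0 hε hc' hc hC2' hC2 (fun r hr => (hLeq r hr).le) (h0'.trans h0.symm).le
      (h1'.trans h1.symm).le r hr)
    (le_of_Lop_le hn hγ0 hε hc hc' hC2 hC2' (fun r hr => (hLeq r hr).ge) (h0.trans h0'.symm).le
      (h1.trans h1'.symm).le r hr)

theorem IsODESol.exists_lt_mul : ∃ C, 0 < C ∧ ∀ r ∈ Ioo (0:ℝ) 1, h r < C * r := by
  have hmono := hsol.strictMonoOn hn hγ hε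
  obtain ⟨hc, hC2, hL, h0, h1⟩ := hsol
  have hlt_one : ∀ r ∈ Ico (0:ℝ) 1, h r < 1 := fun r hr =>
    h1 ▸ hmono ⟨hr.1, hr.2.le⟩ ⟨zero_le_one, le_rfl⟩ hr.2
  set M := 1 + ε⁻¹
  have hM : 1 < M := lt_add_of_pos_right 1 (inv_pos.2 hε)
  have hεM : ε⁻¹ ≤ M := le_add_of_nonneg_left zero_le_one
  set δ := (2 * M)⁻¹
  have hδ : δ ∈ Ioo (0:ℝ) 1 := ⟨by positivity, inv_lt_one_of_one_lt₀ (by linarith)⟩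
  have hMδ : M * δ = 2⁻¹ := by simp only [δ]; field_simp
  clear_value M δ
  -- `4M (r - M r³)` is a supersolution which at `δ` exceeds `1 > h δ`
  have hbarrier : ∀ r ∈ Ioo 0 δ, h r < 4 * M * (r - M * r ^ 3) := by
    have hsub : Ioo 0 δ ⊆ Ioo (0:ℝ) 1 := Ioo_subset_Ioo_right hδ.2.le
    refine lt_of_Lop_lt hn (zero_lt_one.trans hγ) hε (hc.mono (Icc_subset_Icc_right hδ.2.le))
      (by fun_prop) (fun r hr => hC2 r (hsub hr)) (fun _ _ => by fun_prop)
      (fun r hr => ?_) (by simp [h0]) ?_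
    · rw [hL r (hsub hr)]
      exact Lop_cubic_neg hγ hε (by positivity) hεM hr.1
    · have : 4 * M * (δ - M * δ ^ 3) = 2 - δ := by
        linear_combination (4 - 2 * δ * (2 * M * δ + 1)) * hMδ
      linarith [hlt_one δ ⟨hδ.1.le, hδ.2⟩, hδ.2]
  refine ⟨4 * M, by positivity, fun r hr => ?_⟩
  rcases lt_or_ge r δ with hrδ | hδr
  · have hM0 : 0 < M := zero_lt_one.trans hM
    nlinarith [hbarrier r ⟨hr.1, hrδ⟩, mul_pos (mul_pos hM0 hM0) (pow_pos hr.1 3)]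
  · calc h r < 1 := hlt_one r ⟨hr.1.le, hr.2⟩
      _ < 4 * M * δ := by rw [mul_assoc, hMδ]; norm_num
      _ ≤ 4 * M * r := by gcongr

end Solution

/-- Lemma 7.1: existence, uniqueness, and bounds for the normalized solution `h`. -/
theorem ode_existence_uniqueness (n : ℕ) (hn : 2 ≤ n) (γ ε : ℝ) (hγ : 1 < γ) (hε : 0 < ε) :
    ∃ h : ℝ → ℝ, IsODESol n γ ε h ∧
      (∀ h' : ℝ → ℝ, IsODESol n γ ε h' → EqOn h' h (Icc (0:ℝ) 1)) ∧
      StrictMonoOn h (Icc (0:ℝ) 1) ∧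
      (∀ r ∈ Ioo (0:ℝ) 1, r < h r ∧ h r < r ^ alphaN n γ) ∧
      ∃ Cε : ℝ, 0 < Cε ∧ ∀ r ∈ Ioo (0:ℝ) 1, h r < Cε * r := by
  obtain ⟨h₀, hh₀, hbound⟩ := exists_isODESolIoc_nonneg_le_rpow hn hγ hε
  have hsol := hh₀.isODESol_update (alphaN_pos hn hγ) hbound
  exact ⟨_, hsol, fun h' hsol' => hsol.eqOn hn hγ hε hsol',
    hsol.strictMonoOn hn hγ hε,
    fun r hr => ⟨hsol.self_lt hn hγ hε r hr, hsol.lt_rpow_alphaN hn hγ hε r hr⟩,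
    hsol.exists_lt_mul hn hγ hε⟩
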